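/- Let A be a σ-unital C*-algebra with strictly positive element e ∈ A₊, let B be a C*-algebra, and let φ : A → B be a contractive positive linear map. Then the hereditary sub-C*-algebra of B generated by φ(e) coincides with the sub-C*-algebra closure of φ(A)·B·φ(A); that is, closure(φ(e) B φ(e)) = closure(span{φ(x) b φ(y) : x, y ∈ A, b ∈ B}). -/

import Mathlib

/-!
For `0 ≤ c ≤ h` in a C⋆-algebra, `c` lies in `closure (h B h)`: in the unitization put
`d = ε (h + ε)⁻¹` and `w = 1 - d = h (h + ε)⁻¹`; then `w c w ∈ h B h`, `c - w c w = d c + w c d`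
and `‖c d‖² ≤ ‖c‖ ‖d h d‖ ≤ ‖c‖ ε / 4`.

For `p ≥ 0` we have `0 ≤ φ (e p e) ≤ ‖p‖ ‖e‖ φ e`, so `φ (e A e)`, and by density of `e A e` and
continuity of positive maps all of `φ A`, lies in the closed subspace `closure (φ e B φ e)`.
That subspace absorbs products `x b y` of its elements, which gives the nontrivial inclusion.
-/

open CStarAlgebra

section NonUnital

variable {A : Type*} [NonUnitalCStarAlgebra A] [PartialOrder A] [StarOrderedRing A]

lemma CStarAlgebra.mul_self_le_norm_smul {a : A} (ha : 0 ≤ a) : a * a ≤ ‖a‖ • a := by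
  obtain ⟨s, hs, rfl⟩ : ∃ s : A, 0 ≤ s ∧ s * s = a :=
    ⟨CFC.sqrt a, CFC.sqrt_nonneg a, CFC.sqrt_mul_sqrt_self a⟩
  calc s * s * (s * s) = star s * (s * s) * s := by rw [hs.star_eq]; noncomm_ring
    _ ≤ ‖s * s‖ • (star s * s) := star_left_conjugate_le_norm_smul
    _ = ‖s * s‖ • (s * s) := by rw [hs.star_eq]

lemma CStarAlgebra.conj_le_norm_mul_norm_smul {e p : A} (he : 0 ≤ e) (hp : IsSelfAdjoint p) :
    e * p * e ≤ (‖p‖ * ‖e‖) • e :=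
  calc e * p * e = star e * p * e := by rw [he.star_eq]
    _ ≤ ‖p‖ • (star e * e) := star_left_conjugate_le_norm_smul
    _ ≤ ‖p‖ • (‖e‖ • e) := by
        rw [he.star_eq]
        exact smul_le_smul_of_nonneg_left (mul_self_le_norm_smul he) (norm_nonneg p)
    _ = (‖p‖ * ‖e‖) • e := smul_smul _ _ _

lemma CStarAlgebra.norm_mul_sq_le_of_le {c h d : A} (hc : 0 ≤ c) (hch : c ≤ h)
    (hd : IsSelfAdjoint d) : ‖c * d‖ ^ 2 ≤ ‖c‖ * ‖d * h * d‖ := by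
  have hconj : d * (c * c) * d ≤ ‖c‖ • (d * h * d) :=
    calc d * (c * c) * d ≤ d * (‖c‖ • c) * d :=
          hd.conjugate_le_conjugate (mul_self_le_norm_smul hc)
      _ = ‖c‖ • (d * c * d) := by rw [mul_smul_comm, smul_mul_assoc]
      _ ≤ ‖c‖ • (d * h * d) :=
          smul_le_smul_of_nonneg_left (hd.conjugate_le_conjugate hch) (norm_nonneg c)
  have hnonneg : 0 ≤ d * (c * c) * d := hd.conjugate_nonneg <| by
    simpa only [hc.star_eq] using star_mul_self_nonneg c
  calc ‖c * d‖ ^ 2 = ‖d * (c * c) * d‖ := by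
        rw [sq, ← CStarRing.norm_star_mul_self, star_mul, hd.star_eq, hc.star_eq]; noncomm_ring
    _ ≤ ‖‖c‖ • (d * h * d)‖ := norm_le_norm_of_nonneg_of_le hnonneg hconj
    _ = ‖c‖ * ‖d * h * d‖ := by rw [norm_smul, norm_norm]

end NonUnital

section Unital

variable {U : Type*} [CStarAlgebra U] [PartialOrder U] [StarOrderedRing U] {h : U} {ε : ℝ}

lemma continuousOn_inv_add_spectrum (hh : 0 ≤ h) (hε : 0 < ε) :
    ContinuousOn (fun t : ℝ => (t + ε)⁻¹) (spectrum ℝ h) :=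
  ContinuousOn.inv₀ (by fun_prop) fun t ht =>
    (add_pos_of_nonneg_of_pos (spectrum_nonneg_of_nonneg hh ht) hε).ne'

lemma mul_cfc_inv_add_add_smul (hh : 0 ≤ h) (hε : 0 < ε) :
    h * cfc (fun t : ℝ => (t + ε)⁻¹) h + ε • cfc (fun t : ℝ => (t + ε)⁻¹) h = 1 := by
  have hcont := continuousOn_inv_add_spectrum hh hε
  calc h * cfc (fun t : ℝ => (t + ε)⁻¹) h + ε • cfc (fun t : ℝ => (t + ε)⁻¹) h
      = cfc (fun t : ℝ => t * (t + ε)⁻¹ + ε • (t + ε)⁻¹) h := by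
        rw [cfc_add .., cfc_mul .., cfc_smul .., cfc_id' ℝ h]
    _ = cfc (fun _ : ℝ => (1 : ℝ)) h := cfc_congr fun t ht => by
        have : t + ε ≠ 0 := (add_pos_of_nonneg_of_pos (spectrum_nonneg_of_nonneg hh ht) hε).ne'
        rw [smul_eq_mul, ← add_mul, mul_inv_cancel₀ this]
    _ = 1 := cfc_const_one ℝ h

lemma norm_mul_cfc_inv_add_le_one (hh : 0 ≤ h) (hε : 0 < ε) :
    ‖h * cfc (fun t : ℝ => (t + ε)⁻¹) h‖ ≤ 1 := by
  have hcont := continuousOn_inv_add_spectrum hh hε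
  have hmul : h * cfc (fun t : ℝ => (t + ε)⁻¹) h = cfc (fun t : ℝ => t * (t + ε)⁻¹) h := by
    rw [cfc_mul .., cfc_id' ℝ h]
  rw [hmul]
  refine norm_cfc_le zero_le_one fun t ht => ?_
  have ht0 := spectrum_nonneg_of_nonneg hh ht
  rw [Real.norm_eq_abs, abs_of_nonneg (by positivity), ← div_eq_mul_inv,
    div_le_one (by positivity)]
  linarith

lemma norm_cfc_inv_add_mul_mul_le (hh : 0 ≤ h) (hε : 0 < ε) :
    ‖cfc (fun t : ℝ => (t + ε)⁻¹) h * h * cfc (fun t : ℝ => (t + ε)⁻¹) h‖ ≤ (4 * ε)⁻¹ := by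
  have hcont := continuousOn_inv_add_spectrum hh hε
  have hmul : cfc (fun t : ℝ => (t + ε)⁻¹) h * h * cfc (fun t : ℝ => (t + ε)⁻¹) h =
      cfc (fun t : ℝ => t / (t + ε) ^ 2) h := by
    rw [← cfc_congr fun t _ => show (t + ε)⁻¹ * t * (t + ε)⁻¹ = t / (t + ε) ^ 2 by
        rw [div_eq_mul_inv, ← inv_pow]; ring,
      cfc_mul .., cfc_mul (fun t : ℝ => (t + ε)⁻¹) (fun t : ℝ => t) h, cfc_id' ℝ h]
  rw [hmul]
  refine norm_cfc_le (by positivity) fun t ht => ?_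
  have ht0 := spectrum_nonneg_of_nonneg hh ht
  rw [Real.norm_eq_abs, abs_of_nonneg (by positivity), div_le_iff₀ (by positivity),
    inv_mul_eq_div, le_div_iff₀ (by positivity)]
  nlinarith [sq_nonneg (t - ε)]

lemma CStarAlgebra.mem_closure_range_mul_mul_of_le {c : U} (hc : 0 ≤ c) (hch : c ≤ h) :
    c ∈ closure (Set.range fun r : U => h * (r * c * r) * h) := by
  have hh : 0 ≤ h := hc.trans hch
  rw [Metric.mem_closure_iff]
  intro δ hδ
  obtain ⟨ε, hε, hεδ⟩ : ∃ ε : ℝ, 0 < ε ∧ ‖c‖ * ε < δ ^ 2 := by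
    refine ⟨δ ^ 2 / (‖c‖ + 1), by positivity, ?_⟩
    rw [mul_div_assoc', div_lt_iff₀ (by positivity)]
    nlinarith [norm_nonneg c, pow_pos hδ 2]
  set r := cfc (fun t : ℝ => (t + ε)⁻¹) h
  set d := ε • r
  have hd : IsSelfAdjoint d := (IsSelfAdjoint.all ε).smul (cfc_predicate _ _)
  have hcomm : h * r = r * h := by
    simpa only [cfc_id' ℝ h] using
      (cfc_commute_cfc (fun t : ℝ => t) (fun t : ℝ => (t + ε)⁻¹) h).eq
  have hw : h * r = 1 - d := eq_sub_of_add_eq (mul_cfc_inv_add_add_smul hh hε)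
  refine ⟨_, ⟨r, rfl⟩, ?_⟩
  have hdecomp : c - h * (r * c * r) * h = d * c + (h * r) * c * d := by
    rw [show h * (r * c * r) * h = (h * r) * c * (r * h) by noncomm_ring, ← hcomm, hw]
    noncomm_ring
  have hdhd : ‖d * h * d‖ ≤ ε / 4 := by
    rw [show d * h * d = (ε * ε) • (r * h * r) by
        simp only [d, smul_mul_assoc, mul_smul_comm, smul_smul],
      norm_smul, Real.norm_of_nonneg (by positivity)]
    calc ε * ε * ‖r * h * r‖ ≤ ε * ε * (4 * ε)⁻¹ :=
          mul_le_mul_of_nonneg_left (norm_cfc_inv_add_mul_mul_le hh hε) (by positivity)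
      _ = ε / 4 := by field_simp
  have hcd : ‖c * d‖ ^ 2 ≤ ‖c‖ * (ε / 4) :=
    (norm_mul_sq_le_of_le hc hch hd).trans (mul_le_mul_of_nonneg_left hdhd (norm_nonneg c))
  have hdc : ‖d * c‖ = ‖c * d‖ := by
    rw [← norm_star, star_mul, hc.star_eq, hd.star_eq]
  have hbound : dist c (h * (r * c * r) * h) ≤ 2 * ‖c * d‖ :=
    calc dist c (h * (r * c * r) * h) = ‖d * c + (h * r) * c * d‖ := by
          rw [dist_eq_norm, hdecomp]
      _ ≤ ‖d * c‖ + ‖h * r‖ * ‖c * d‖ := by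
          grw [norm_add_le, mul_assoc, norm_mul_le (h * r)]
      _ ≤ 2 * ‖c * d‖ := by
          grw [hdc, norm_mul_cfc_inv_add_le_one hh hε]; linarith
  refine hbound.trans_lt (lt_of_pow_lt_pow_left₀ 2 hδ.le ?_)
  nlinarith

end Unital

section Corner

variable {B : Type*} [NonUnitalCStarAlgebra B]

/-- `closure (h B h)`; for `h ≥ 0` this is the hereditary C⋆-subalgebra generated by `h`. -/
def closedCorner (h : B) : Submodule ℂ B :=
  (LinearMap.range (LinearMap.mulLeftRight ℂ (h, h))).topologicalClosure

lemma coe_closedCorner (h : B) :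
    (closedCorner h : Set B) = closure {z | ∃ b, z = h * b * h} := by
  rw [closedCorner, Submodule.topologicalClosure_coe]
  congr 1
  ext z
  simp [LinearMap.mulLeftRight_apply, eq_comm]

lemma isClosed_closedCorner (h : B) : IsClosed (closedCorner h : Set B) :=
  Submodule.isClosed_topologicalClosure _

lemma mul_mul_mem_closedCorner {h x y : B} (b : B) (hx : x ∈ closedCorner h)
    (hy : y ∈ closedCorner h) : x * b * y ∈ closedCorner h := by
  rw [← SetLike.mem_coe, coe_closedCorner] at hx hy ⊢
  refine map_mem_closure₂ (f := fun x y => x * b * y) (by fun_prop) hx hy ?_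
  rintro _ ⟨p, rfl⟩ _ ⟨q, rfl⟩
  exact ⟨p * h * b * (h * q), by noncomm_ring⟩

lemma closedCorner_smul_le (t : ℝ) (h : B) : closedCorner (t • h) ≤ closedCorner h :=
  Submodule.topologicalClosure_mono <| by
    rintro _ ⟨b, rfl⟩
    exact ⟨(t * t) • b, by
      simp only [LinearMap.mulLeftRight_apply, smul_mul_assoc, mul_smul_comm, smul_smul]⟩

variable [PartialOrder B] [StarOrderedRing B]

lemma mem_closedCorner_of_le {c h : B} (hc : 0 ≤ c) (hch : c ≤ h) : c ∈ closedCorner h := by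
  have hinr : Isometry ((↑) : B → Unitization ℂ B) := Isometry.of_dist_eq fun x y => by
    rw [dist_eq_norm, dist_eq_norm, ← Unitization.inr_sub, Unitization.norm_inr]
  have hunital := mem_closure_range_mul_mul_of_le (Unitization.inr_nonneg_iff.mpr hc)
    ((Unitization.inr_le_iff c h hc.isSelfAdjoint (hc.trans hch).isSelfAdjoint).mpr hch)
  rw [← SetLike.mem_coe, coe_closedCorner, hinr.isEmbedding.closure_eq_preimage_closure_image]
  refine closure_mono ?_ hunital
  rintro _ ⟨r, rfl⟩
  -- `r * c * r` lies in `B`, an ideal of its unitization.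
  have hsnd : ((r * c * r).snd : Unitization ℂ B) = r * c * r := Unitization.ext (by simp) rfl
  exact ⟨h * (r * c * r).snd * h, ⟨_, rfl⟩, by simp only [Unitization.inr_mul, hsnd]⟩

lemma mem_closedCorner_of_le_smul {c h : B} {t : ℝ} (hc : 0 ≤ c) (hch : c ≤ t • h) :
    c ∈ closedCorner h :=
  closedCorner_smul_le t h (mem_closedCorner_of_le hc hch)

end Corner

namespace PositiveLinearMap

variable {A B : Type*} [NonUnitalCStarAlgebra A] [PartialOrder A] [StarOrderedRing A]
  [NonUnitalCStarAlgebra B] [PartialOrder B] [StarOrderedRing B]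

lemma map_conj_mem_closedCorner (f : A →ₚ[ℂ] B) {e : A} (he : 0 ≤ e) (a : A) :
    f (e * a * e) ∈ closedCorner (f e) := by
  suffices Submodule.span ℂ {p : A | 0 ≤ p} ≤
      (closedCorner (f e)).comap ((f : A →ₗ[ℂ] B) ∘ₗ LinearMap.mulLeftRight ℂ (e, e)) by
    simpa [LinearMap.mulLeftRight_apply] using this (span_nonneg (A := A) ▸ Submodule.mem_top)
  rw [Submodule.span_le]
  intro p (hp : 0 ≤ p)
  have hle : f (e * p * e) ≤ (‖p‖ * ‖e‖) • f e := by
    simpa using f.monotone' (conj_le_norm_mul_norm_smul he hp.isSelfAdjoint)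
  simpa [LinearMap.mulLeftRight_apply] using
    mem_closedCorner_of_le_smul (f.map_nonneg (conjugate_nonneg_of_nonneg hp he)) hle

lemma map_mem_closedCorner (f : A →ₚ[ℂ] B) {e : A} (he : 0 ≤ e)
    (hdense : Dense {x | ∃ a, x = e * a * e}) (x : A) : f x ∈ closedCorner (f e) :=
  hdense.induction (by rintro _ ⟨a, rfl⟩; exact f.map_conj_mem_closedCorner he a)
    ((isClosed_closedCorner _).preimage (map_continuous f)) x

end PositiveLinearMap

theorem stmt10_general {A B : Type*} [NonUnitalCStarAlgebra A] [PartialOrder A] [StarOrderedRing A]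
    [NonUnitalCStarAlgebra B] [PartialOrder B] [StarOrderedRing B]
    (e : A) (he : 0 ≤ e)
    (hstrict : closure {x : A | ∃ a : A, x = e * a * e} = Set.univ)
    (φ : A →ₗ[ℂ] B)
    (hpos : ∀ x : A, 0 ≤ x → 0 ≤ φ x) :
    closure {z : B | ∃ b : B, z = φ e * b * φ e} =
      closure ((Submodule.span ℂ {z : B | ∃ (x y : A) (b : B), z = φ x * b * φ y} : Submodule ℂ B)
        : Set B) := by
  have hφ : ∀ x, φ x ∈ closedCorner (φ e) :=
    (PositiveLinearMap.mk₀ φ hpos).map_mem_closedCorner he (dense_iff_closure_eq.mpr hstrict)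
  rw [← coe_closedCorner]
  refine subset_antisymm ?_ (closure_minimal ?_ (isClosed_closedCorner _))
  · rw [coe_closedCorner]
    exact closure_mono fun z ⟨b, hz⟩ => Submodule.subset_span ⟨e, e, b, hz⟩
  · refine SetLike.coe_subset_coe.mpr (Submodule.span_le.mpr ?_)
    rintro _ ⟨x, y, b, rfl⟩
    exact mul_mul_mem_closedCorner b (hφ x) (hφ y)

/-- Let `A` be a σ-unital C*-algebra with strictly positive element `e` (i.e. the closure of
`e A e` is all of `A`), let `B` be a C*-algebra, and let `φ : A → B` be a contractive positive
linear map.  Then the hereditary subalgebra of `B` generated by `φ e`, namely the closure of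
`φ(e) B φ(e)`, coincides with the closure of the linear span of `φ(A) B φ(A)`. -/
theorem stmt10 {A B : Type*} [NonUnitalCStarAlgebra A] [PartialOrder A] [StarOrderedRing A]
    [NonUnitalCStarAlgebra B] [PartialOrder B] [StarOrderedRing B]
    (e : A) (he : 0 ≤ e)
    (hstrict : closure {x : A | ∃ a : A, x = e * a * e} = Set.univ)
    (φ : A →ₗ[ℂ] B) (hcontr : ∀ x : A, ‖φ x‖ ≤ ‖x‖)
    (hpos : ∀ x : A, 0 ≤ x → 0 ≤ φ x) :
    closure {z : B | ∃ b : B, z = φ e * b * φ e} =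
      closure ((Submodule.span ℂ {z : B | ∃ (x y : A) (b : B), z = φ x * b * φ y} : Submodule ℂ B)
        : Set B) :=
  stmt10_general e he hstrict φ hpos
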